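/- Let 0 < c_L < c_H < 1 and p ∈ (0, 1), let J'(p) denote the derivative of p ↦ J(c_L, c_H, p) at p, and set y = (1−p)·(c_H/c_L − 1). If y < 1, then (1−p)·J'(p) + J(c_L, c_H, p) = c_L·∑_{i=2}^{∞} (−1)^i · y^i / i, where the series on the right converges. -/

import Mathlib

/-!
On the region where the mixture `m = p c_L + (1 - p) c_H` is positive, `J` is differentiable
with `J'(p) = φ(c_L) - φ(c_H) - (log m + 1)(c_L - c_H)`. Since `m = c_L (1 + y)` and
`(1 - p)(c_H - c_L) = c_L y`, the combination `(1 - p) J'(p) + J(p)` collapses to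
`c_L (y - log (1 + y))`, and for `|y| < 1` this is the Mercator series of `log (1 + y)`
with its linear term removed.
-/

/-- Partial entropy function: φ(p) = p·log p for p > 0, φ(0) = 0. -/
noncomputable def phi (p : ℝ) : ℝ := if 0 < p then p * Real.log p else 0

/-- J(c_L, c_H, p) = p·φ(c_L) + (1−p)·φ(c_H) − φ(p·c_L + (1−p)·c_H). -/
noncomputable def J (cL cH p : ℝ) : ℝ :=
  p * phi cL + (1 - p) * phi cH - phi (p * cL + (1 - p) * cH)

open Real

lemma phi_of_pos {x : ℝ} (hx : 0 < x) : phi x = x * log x := if_pos hx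

lemma hasDerivAt_phi {x : ℝ} (hx : 0 < x) : HasDerivAt phi (log x + 1) x := by
  refine (hasDerivAt_mul_log hx.ne').congr_of_eventuallyEq ?_
  filter_upwards [eventually_gt_nhds hx] with t ht using phi_of_pos ht

lemma hasDerivAt_J {cL cH p : ℝ} (hm : 0 < p * cL + (1 - p) * cH) :
    HasDerivAt (J cL cH)
      (phi cL - phi cH - (log (p * cL + (1 - p) * cH) + 1) * (cL - cH)) p := by
  have hline (a b : ℝ) : HasDerivAt (fun q : ℝ => q * a + (1 - q) * b) (a - b) p :=
    (((hasDerivAt_id p).mul_const a).add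
      (((hasDerivAt_id p).const_sub 1).mul_const b)).congr_deriv (by ring)
  have hmix := (hasDerivAt_phi hm).comp p (hline cL cH)
  exact (hline (phi cL) (phi cH)).sub hmix

lemma hasSum_sub_log_one_add {y : ℝ} (hy : |y| < 1) :
    HasSum (fun i : ℕ => (-1 : ℝ) ^ (i + 2) * y ^ (i + 2) / (i + 2 : ℝ)) (y - log (1 + y)) := by
  have hmercator := hasSum_pow_div_log_of_abs_lt_one (x := -y) (by rwa [abs_neg])
  rw [← hasSum_nat_add_iff' 1] at hmercator
  have hterm (i : ℕ) : (-1 : ℝ) ^ (i + 2) * y ^ (i + 2) / (i + 2 : ℝ)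
      = (-y) ^ (i + 1 + 1) / ((i + 1 : ℕ) + 1 : ℝ) := by
    rw [← neg_pow]
    push_cast
    ring
  have hvalue : -log (1 - -y) - ∑ i ∈ Finset.range 1, (-y) ^ (i + 1) / ((i : ℝ) + 1)
      = y - log (1 + y) := by
    simp only [Finset.sum_range_one, sub_neg_eq_add]
    ring
  simp only [hterm]
  rwa [hvalue] at hmercator

lemma one_sub_mul_deriv_J_add_J {cL cH p y : ℝ} (hcL : 0 < cL) (hcH : 0 < cH)
    (hy : y = (1 - p) * (cH / cL - 1)) (h1y : 0 < 1 + y) :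
    (1 - p) * (phi cL - phi cH - (log (p * cL + (1 - p) * cH) + 1) * (cL - cH)) + J cL cH p
      = cL * (y - log (1 + y)) := by
  have hm : p * cL + (1 - p) * cH = cL * (1 + y) := by
    rw [hy]; field_simp; ring
  have hgap : (1 - p) * (cH - cL) = cL * y := by
    rw [hy]; field_simp
  rw [J, hm, phi_of_pos hcL, phi_of_pos hcH, phi_of_pos (mul_pos hcL h1y),
    log_mul hcL.ne' h1y.ne']
  linear_combination (log cL + log (1 + y) + 1) * hgap

theorem J_div_one_sub_p_numerator_series_general (cL cH p y : ℝ)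
    (hcL : 0 < cL) (hLH : cL < cH)
    (hp : p ∈ Set.Ioo (0 : ℝ) 1)
    (hy : y = (1 - p) * (cH / cL - 1))
    (hy1 : y < 1) :
    (Summable fun i : ℕ => (-1 : ℝ) ^ (i + 2) * y ^ (i + 2) / (i + 2 : ℝ)) ∧
    (1 - p) * deriv (fun q => J cL cH q) p + J cL cH p
      = cL * ∑' i : ℕ, (-1 : ℝ) ^ (i + 2) * y ^ (i + 2) / (i + 2 : ℝ) := by
  have hcH : 0 < cH := hcL.trans hLH
  have hy0 : 0 < y := by
    rw [hy]
    exact mul_pos (sub_pos.2 hp.2) (sub_pos.2 ((one_lt_div hcL).2 hLH))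
  have hseries := hasSum_sub_log_one_add (abs_lt.2 ⟨by linarith, hy1⟩)
  have hm : 0 < p * cL + (1 - p) * cH := by
    nlinarith [hp.1, hp.2]
  refine ⟨hseries.summable, ?_⟩
  rw [hseries.tsum_eq, (hasDerivAt_J hm).deriv]
  exact one_sub_mul_deriv_J_add_J hcL hcH hy (by linarith)

/-- With y = (1−p)·(c_H/c_L − 1), if y < 1 then
(1−p)·J'(p) + J(p) = c_L·∑_{i=2}^∞ (−1)^i·y^i/i, the series being convergent
(indexed here by i ↦ i + 2). -/
theorem J_div_one_sub_p_numerator_series (cL cH p y : ℝ)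
    (hcL : 0 < cL) (hLH : cL < cH) (hcH : cH < 1)
    (hp : p ∈ Set.Ioo (0 : ℝ) 1)
    (hy : y = (1 - p) * (cH / cL - 1))
    (hy1 : y < 1) :
    (Summable fun i : ℕ => (-1 : ℝ) ^ (i + 2) * y ^ (i + 2) / (i + 2 : ℝ)) ∧
    (1 - p) * deriv (fun q => J cL cH q) p + J cL cH p
      = cL * ∑' i : ℕ, (-1 : ℝ) ^ (i + 2) * y ^ (i + 2) / (i + 2 : ℝ) :=
  J_div_one_sub_p_numerator_series_general cL cH p y hcL hLH hp hy hy1
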